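/- Let c₁(S) denote the number of pairs (s, g) with s ∈ S, g ∉ S, and g = s + 1 (equivalently, the number of boxes with hook length 1 in the Young diagram of S). For any numerical set S ≠ ℕ, c₁(S̃) = c₁(S) − 1. -/

import Mathlib

open Set

def IsNumericalSet (S : Set ℕ) : Prop := 0 ∈ S ∧ Sᶜ.Finite

def IsNumericalSemigroup (S : Set ℕ) : Prop :=
  IsNumericalSet S ∧ ∀ a ∈ S, ∀ b ∈ S, a + b ∈ S

/-- The associated set `A(S) = {s ∈ S : s + S ⊆ S}`. -/
def A (S : Set ℕ) : Set ℕ := {s ∈ S | ∀ t ∈ S, s + t ∈ S}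

/-- The Frobenius number: the largest gap of `S`. -/
noncomputable def F (S : Set ℕ) : ℕ := sSup Sᶜ

/-- The base: the largest element of `S` below `F S`. -/
noncomputable def B (S : Set ℕ) : ℕ := sSup {s | s ∈ S ∧ s < F S}

/-- The multiplicity: the smallest positive element of `S`. -/
noncomputable def m (S : Set ℕ) : ℕ := sInf {s | s ∈ S ∧ 0 < s}

/-- The complement numerical set (for `S ≠ ℕ`). -/
noncomputable def Stilde (S : Set ℕ) : Set ℕ :=
  {x | ∃ s ∈ S, s ≤ B S ∧ x = B S - s} ∪ {n | B S ≤ n}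

-- The complement operation, with the convention that the complement of ℕ is ℕ.
open Classical in
noncomputable def complOp (S : Set ℕ) : Set ℕ :=
  if S = Set.univ then Set.univ else Stilde S

/-- The genus: the number of gaps. -/
noncomputable def genus (S : Set ℕ) : ℕ := Sᶜ.ncard

/-- The number of boxes with hook length 1. -/
noncomputable def c1 (S : Set ℕ) : ℕ := {n | n ∈ S ∧ n + 1 ∉ S}.ncard

/-- An atom: a positive element not a sum of two positive elements. -/
def IsAtomOf (S : Set ℕ) (a : ℕ) : Prop :=
  a ∈ S ∧ 0 < a ∧ ¬ ∃ x ∈ S, ∃ y ∈ S, 0 < x ∧ 0 < y ∧ a = x + y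

/-- A small atom: an atom smaller than the Frobenius number. -/
def IsSmallAtom (S : Set ℕ) (a : ℕ) : Prop := IsAtomOf S a ∧ a < F S

/-- The embedding dimension: the number of atoms. -/
noncomputable def numAtoms (S : Set ℕ) : ℕ := {a | IsAtomOf S a}.ncard

/-- Maximal embedding dimension. -/
def MaxED (S : Set ℕ) : Prop := numAtoms S = m S


/-!
Write `b = B S`. Every element of `S` above `b` lies above `F S`, so the descents `n ∈ S, n + 1 ∉ S`
of `S` are those below `b` together with `b` itself. Below `b`, membership in `S̃` is membership in
`S` reflected by `n ↦ b - n`, which turns the descents of `S̃` into the ascents `n ∉ S, n + 1 ∈ S`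
of `S` below `b`; and as `0` and `b` both lie in `S`, on `[0, b)` ascents and descents alternate,
so there are equally many of each.
-/

section Steps

variable (S : Set ℕ) [DecidablePred (· ∈ S)]

def descents (b : ℕ) : Finset ℕ := {n ∈ Finset.range b | n ∈ S ∧ n + 1 ∉ S}

def ascents (b : ℕ) : Finset ℕ := {n ∈ Finset.range b | n ∉ S ∧ n + 1 ∈ S}

variable {S}

theorem card_descents_sub_card_ascents (b : ℕ) :
    ((descents S b).card : ℤ) - (ascents S b).card =
      (if 0 ∈ S then 1 else 0) - if b ∈ S then 1 else 0 := by
  induction b with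
  | zero => simp [descents, ascents]
  | succ b ih =>
    simp only [descents, ascents, Finset.range_add_one, Finset.filter_insert] at ih ⊢
    have hb {p : ℕ → Prop} [DecidablePred p] : b ∉ (Finset.range b).filter p := by simp
    by_cases h : b ∈ S <;> by_cases h' : b + 1 ∈ S <;> simp [h, h', hb] at ih ⊢ <;> omega

theorem card_ascents_eq_card_descents {b : ℕ} (h : 0 ∈ S ↔ b ∈ S) :
    (ascents S b).card = (descents S b).card := by
  have := card_descents_sub_card_ascents (S := S) b
  by_cases h0 : 0 ∈ S <;> simp [h0, ← h] at this <;> omega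

theorem descents_add_one {b : ℕ} (hb : b ∈ S) (hb' : b + 1 ∉ S) :
    descents S (b + 1) = insert b (descents S b) := by
  simp [descents, Finset.range_add_one, Finset.filter_insert, hb, hb']

theorem c1_eq_card_descents {b : ℕ} (h : ∀ n, b ≤ n → n ∈ S → n + 1 ∈ S) :
    c1 S = (descents S b).card := by
  rw [c1, ← Set.ncard_coe_finset]
  congr 1
  ext n
  simp only [descents, Finset.coe_filter, Finset.mem_range, Set.mem_ofPred_eq]
  exact ⟨fun hn => ⟨by_contra fun hnb => hn.2 (h n (by omega) hn.1), hn⟩, And.right⟩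

theorem card_descents_of_reflect {T : Set ℕ} [DecidablePred (· ∈ T)] {b : ℕ}
    (h : ∀ n ≤ b, n ∈ T ↔ b - n ∈ S) : (descents T b).card = (ascents S b).card := by
  apply Finset.card_nbij' (b - 1 - ·) (b - 1 - ·)
  · intro n hn
    simp only [descents, ascents, Finset.coe_filter, Finset.mem_range, Set.mem_ofPred_eq] at hn ⊢
    rw [h n (by omega), h (n + 1) (by omega)] at hn
    refine ⟨by omega, ?_, ?_⟩
    · convert hn.2.2 using 2; omega
    · convert hn.2.1 using 2; omega
  · intro n hn
    simp only [descents, ascents, Finset.coe_filter, Finset.mem_range, Set.mem_ofPred_eq] at hn ⊢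
    refine ⟨by omega, ?_⟩
    rw [h _ (by omega), h _ (by omega)]
    constructor
    · convert hn.2.2 using 2; omega
    · convert hn.2.1 using 2; omega
  · intro n hn
    simp only [descents, Finset.coe_filter, Finset.mem_range, Set.mem_ofPred_eq] at hn
    dsimp only
    omega
  · intro n hn
    simp only [ascents, Finset.coe_filter, Finset.mem_range, Set.mem_ofPred_eq] at hn
    dsimp only
    omega

end Steps

section Frobenius

variable {S : Set ℕ}

theorem F_notMem (hfin : Sᶜ.Finite) (hne : S ≠ Set.univ) : F S ∉ S :=
  Nat.sSup_mem (Set.nonempty_compl.mpr hne) hfin.bddAbove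

theorem mem_of_F_lt (hfin : Sᶜ.Finite) {n : ℕ} (hn : F S < n) : n ∈ S :=
  by_contra fun h => hn.not_ge (le_csSup hfin.bddAbove h)

theorem le_B {s : ℕ} (hs : s ∈ S) (hsF : s < F S) : s ≤ B S :=
  le_csSup ⟨F S, fun _ hx => hx.2.le⟩ ⟨hs, hsF⟩

theorem B_mem_and_lt_F (h0 : 0 ∈ S) (hfin : Sᶜ.Finite) (hne : S ≠ Set.univ) :
    B S ∈ S ∧ B S < F S := by
  have hF : 0 < F S := Nat.pos_of_ne_zero fun h => F_notMem hfin hne (h ▸ h0)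
  exact Nat.sSup_mem (s := {s | s ∈ S ∧ s < F S}) ⟨0, h0, hF⟩ ⟨F S, fun _ hx => hx.2.le⟩

theorem B_add_one_notMem (h0 : 0 ∈ S) (hfin : Sᶜ.Finite) (hne : S ≠ Set.univ) :
    B S + 1 ∉ S := by
  intro h
  rcases (Nat.succ_le_of_lt (B_mem_and_lt_F h0 hfin hne).2).lt_or_eq with hlt | heq
  · exact (le_B h hlt).not_gt (Nat.lt_succ_self _)
  · exact F_notMem hfin hne (heq ▸ h)

theorem add_one_mem_of_B_lt (hfin : Sᶜ.Finite) (hne : S ≠ Set.univ) {n : ℕ} (hn : B S < n)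
    (hnS : n ∈ S) : n + 1 ∈ S := by
  have hFn : F S < n := by
    rcases lt_trichotomy n (F S) with hlt | heq | hgt
    · exact absurd (le_B hnS hlt) hn.not_ge
    · exact absurd (heq ▸ hnS) (F_notMem hfin hne)
    · exact hgt
  exact mem_of_F_lt hfin (by omega)

theorem mem_Stilde_of_B_le {n : ℕ} (hn : B S ≤ n) : n ∈ Stilde S := Or.inr hn

theorem mem_Stilde_iff (h0 : 0 ∈ S) {n : ℕ} (hn : n ≤ B S) : n ∈ Stilde S ↔ B S - n ∈ S := by
  refine ⟨?_, fun h => Or.inl ⟨B S - n, h, Nat.sub_le _ _, (Nat.sub_sub_self hn).symm⟩⟩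
  rintro (⟨s, hs, hsB, rfl⟩ | h)
  · rwa [Nat.sub_sub_self hsB]
  · rwa [show B S - n = 0 from Nat.sub_eq_zero_of_le h]

end Frobenius

theorem c1_of_complement (S : Set ℕ) (hS : IsNumericalSet S) (hne : S ≠ Set.univ) :
    c1 (Stilde S) + 1 = c1 S := by
  classical
  obtain ⟨h0, hfin⟩ := hS
  have hB := (B_mem_and_lt_F h0 hfin hne).1
  rw [c1_eq_card_descents (b := B S) fun _ hn _ => mem_Stilde_of_B_le (by omega),
    card_descents_of_reflect fun n hn => mem_Stilde_iff h0 hn,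
    card_ascents_eq_card_descents (iff_of_true h0 hB),
    c1_eq_card_descents (b := B S + 1) fun n hn => add_one_mem_of_B_lt hfin hne (by omega),
    descents_add_one hB (B_add_one_notMem h0 hfin hne),
    Finset.card_insert_of_notMem (by simp [descents])]
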